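/- Let Q be a stably supported quantale whose underlying complete lattice is a frame (a stable quantal frame), with unit e and top element 1. Then for all a ∈ Q: (a ∧ e) 1 ≥ ⨆{ x ∧ y : x, y ∈ Q, x y* ≤ a } and 1 (a ∧ e) ≥ ⨆{ x ∧ y : x, y ∈ Q, x* y ≤ a }. -/

import Mathlib

/-!
If `x y* ≤ a`, then `ς(x ∧ y) ≤ (x ∧ y)(x ∧ y)* ≤ x y* ≤ a` and `ς(x ∧ y) ≤ e`, so
`x ∧ y ≤ ς(x ∧ y)(x ∧ y) ≤ (a ∧ e) 1`. The second inequality is the first one in the opposite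
quantale `(a, b) ↦ b a`, whose support is `a ↦ (ς a*)*`.
-/

theorem monotone_of_map_sSup {α β : Type*} [CompleteLattice α] [CompleteLattice β] {f : α → β}
    (hf : ∀ T : Set α, f (sSup T) = sSup (f '' T)) : Monotone f :=
  OrderHomClass.mono (⟨f, hf⟩ : sSupHom α β)

section SupportedQuantale

variable {Q : Type*} {m : Q → Q → Q} {e : Q} {st sp : Q → Q}

theorem star_unit (her : ∀ a, m a e = a) (hstst : ∀ a, st (st a) = a)
    (hstm : ∀ a b, st (m a b) = m (st b) (st a)) : st e = e := by
  have h := hstm (st e) e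
  rwa [her, hstst, her, eq_comm] at h

variable [CompleteLattice Q]

theorem star_support_star_le (hst : Monotone st) (hstst : ∀ a, st (st a) = a)
    (hstm : ∀ a b, st (m a b) = m (st b) (st a)) (hsp2 : ∀ a, sp a ≤ m a (st a)) (a : Q) :
    st (sp (st a)) ≤ m (st a) a := by
  simpa only [hstm, hstst] using hst (hsp2 (st a))

theorem le_mul_star_support_star (hst : Monotone st) (hstst : ∀ a, st (st a) = a)
    (hstm : ∀ a b, st (m a b) = m (st b) (st a)) (hsp3 : ∀ a, a ≤ m (sp a) a) (a : Q) :
    a ≤ m a (st (sp (st a))) := by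
  simpa only [hstm, hstst] using hst (hsp3 (st a))

theorem inf_le_mul_top_of_mul_star_le (hml : ∀ a, Monotone (m a))
    (hmr : ∀ b, Monotone (fun a => m a b)) (hst : Monotone st) (hsp1 : ∀ a, sp a ≤ e)
    (hsp2 : ∀ a, sp a ≤ m a (st a)) (hsp3 : ∀ a, a ≤ m (sp a) a) {a x y : Q}
    (h : m x (st y) ≤ a) : x ⊓ y ≤ m (a ⊓ e) ⊤ := by
  have hsupp : sp (x ⊓ y) ≤ a :=
    calc sp (x ⊓ y) ≤ m (x ⊓ y) (st (x ⊓ y)) := hsp2 _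
      _ ≤ m x (st (x ⊓ y)) := hmr _ inf_le_left
      _ ≤ m x (st y) := hml _ (hst inf_le_right)
      _ ≤ a := h
  calc x ⊓ y ≤ m (sp (x ⊓ y)) (x ⊓ y) := hsp3 _
    _ ≤ m (a ⊓ e) (x ⊓ y) := hmr _ (le_inf hsupp (hsp1 _))
    _ ≤ m (a ⊓ e) ⊤ := hml _ le_top

end SupportedQuantale

theorem stmt_16_general {Q : Type*} [Order.Frame Q]
    (m : Q → Q → Q) (e : Q) (st : Q → Q) (sp : Q → Q)
    (hdistl : ∀ (a : Q) (T : Set Q), m a (sSup T) = sSup ((fun b => m a b) '' T))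
    (hdistr : ∀ (b : Q) (T : Set Q), m (sSup T) b = sSup ((fun a => m a b) '' T))
    (her : ∀ a : Q, m a e = a)
    (hstsup : ∀ T : Set Q, st (sSup T) = sSup (st '' T))
    (hstst : ∀ a : Q, st (st a) = a)
    (hstm : ∀ a b : Q, st (m a b) = m (st b) (st a))
    (hsp1 : ∀ a : Q, sp a ≤ e)
    (hsp2 : ∀ a : Q, sp a ≤ m a (st a))
    (hsp3 : ∀ a : Q, a ≤ m (sp a) a) :
    ∀ a : Q,
      sSup {z : Q | ∃ x y : Q, m x (st y) ≤ a ∧ z = x ⊓ y} ≤ m (a ⊓ e) ⊤ ∧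
      sSup {z : Q | ∃ x y : Q, m (st x) y ≤ a ∧ z = x ⊓ y} ≤ m ⊤ (a ⊓ e) := by
  intro a
  have hml a := monotone_of_map_sSup (hdistl a)
  have hmr b := monotone_of_map_sSup (f := fun a => m a b) (hdistr b)
  have hst := monotone_of_map_sSup hstsup
  refine ⟨sSup_le ?_, sSup_le ?_⟩
  · rintro _ ⟨x, y, h, rfl⟩
    exact inf_le_mul_top_of_mul_star_le hml hmr hst hsp1 hsp2 hsp3 h
  · rintro _ ⟨x, y, h, rfl⟩
    have hsp1_op a : st (sp (st a)) ≤ e := star_unit her hstst hstm ▸ hst (hsp1 (st a))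
    rw [inf_comm]
    exact inf_le_mul_top_of_mul_star_le (m := fun a b => m b a) hmr hml hst hsp1_op
      (star_support_star_le hst hstst hstm hsp2) (le_mul_star_support_star hst hstst hstm hsp3) h

/-- in a stable quantal frame, `(a ∧ e) 1 ≥ ⨆{x ∧ y : x y* ≤ a}` and
`1 (a ∧ e) ≥ ⨆{x ∧ y : x* y ≤ a}`. -/
theorem stmt_16 {Q : Type*} [Order.Frame Q]
    (m : Q → Q → Q) (e : Q) (st : Q → Q) (sp : Q → Q)
    (hassoc : ∀ a b c : Q, m (m a b) c = m a (m b c))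
    (hdistl : ∀ (a : Q) (T : Set Q), m a (sSup T) = sSup ((fun b => m a b) '' T))
    (hdistr : ∀ (b : Q) (T : Set Q), m (sSup T) b = sSup ((fun a => m a b) '' T))
    (hel : ∀ a : Q, m e a = a) (her : ∀ a : Q, m a e = a)
    (hstsup : ∀ T : Set Q, st (sSup T) = sSup (st '' T))
    (hstst : ∀ a : Q, st (st a) = a)
    (hstm : ∀ a b : Q, st (m a b) = m (st b) (st a))
    (hspsup : ∀ T : Set Q, sp (sSup T) = sSup (sp '' T))
    (hsp1 : ∀ a : Q, sp a ≤ e)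
    (hsp2 : ∀ a : Q, sp a ≤ m a (st a))
    (hsp3 : ∀ a : Q, a ≤ m (sp a) a)
    (hstable : ∀ a b : Q, sp (m a b) ≤ sp a) :
    ∀ a : Q,
      sSup {z : Q | ∃ x y : Q, m x (st y) ≤ a ∧ z = x ⊓ y} ≤ m (a ⊓ e) ⊤ ∧
      sSup {z : Q | ∃ x y : Q, m (st x) y ≤ a ∧ z = x ⊓ y} ≤ m ⊤ (a ⊓ e) :=
  stmt_16_general m e st sp hdistl hdistr her hstsup hstst hstm hsp1 hsp2 hsp3
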